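/- arXiv:2106.02129 — 2 statements merged into one kernel-verified Lean document; each statement's English description precedes it below -/
import Mathlib

section
/- Let Σ be a finite set with |Σ| ≥ 2 and let J, T be positive integers. Consider the graph on vertex set Σ^J in which two tuples are adjacent iff they differ in exactly one coordinate; each edge has a direction j ∈ [J], the coordinate on which its endpoints differ. Let an arbitrary set of edges be designated bad, and for j ∈ [J] let λ_j be the probability that (v,w) is a bad edge when v ~ unif(Σ^J) and w is obtained from v by resampling coordinate j from unif(Σ∖{v_j}). Let σ : [T] → [J] be an arbitrary map, and let v^(0),…,v^(T) be the lazy random walk in which v^(0) ~ unif(Σ^J) and, for 1 ≤ t ≤ T, v^(t) is obtained from v^(t−1) by resampling coordinate σ(t) from unif(Σ). Then the probability that no step of the walk traverses a bad edge is at least |Σ|^{−Σ_{t=1}^T λ_{σ(t)}} (a step with v^(t) = v^(t−1) traverses no edge). -/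
open MeasureTheory Finset Filter ProbabilityTheory

universe u

/-! ## k-SAT basics -/

/-- A `k`-SAT formula on `n` variables with `m` clauses: each clause is an ordered
`k`-tuple of literals, a literal being a pair (variable index, polarity). -/
abbrev Formula (n m k : ℕ) := Fin m → Fin k → Fin n × Bool

/-- An assignment satisfies a clause if some literal of the clause is satisfied. -/
def satClause {n k : ℕ} (x : Fin n → Bool) (C : Fin k → Fin n × Bool) : Prop :=
  ∃ j : Fin k, x (C j).1 = (C j).2

/-- Normalized Hamming distance. -/
noncomputable def hamΔ {n : ℕ} {α : Type*} (x y : Fin n → α) : ℝ :=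
  (Nat.card {i : Fin n // x i ≠ y i} : ℝ) / n

/-- `x` ν-satisfies `Φ` if it satisfies at least `(1-ν)m` clauses. -/
def nuSat {n m k : ℕ} (x : Fin n → Bool) (Φ : Formula n m k) (ν : ℝ) : Prop :=
  (1 - ν) * m ≤ (Nat.card {i : Fin m // satClause x (Φ i)} : ℝ)

/-- `x ∈ {T,F,err}^n` (η,ν)-satisfies `Φ` (`none` is the error symbol). -/
def etaNuSat {n m k : ℕ} (x : Fin n → Option Bool) (Φ : Formula n m k) (η ν : ℝ) : Prop :=
  ∃ y : Fin n → Bool, hamΔ x (fun i => some (y i)) ≤ η ∧ nuSat y Φ ν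

/-! ## polynomials and solving -/

/-- Index set for the one-hot encoding of a formula, of cardinality `N = 2knm`. -/
abbrev Coords (n m k : ℕ) := Fin m × Fin k × (Fin n × Bool)

/-- One-hot encoding of a formula as a vector in `ℝ^N`. -/
def encode {n m k : ℕ} (Φ : Formula n m k) : Coords n m k → ℝ :=
  fun p => if Φ p.1 p.2.1 = p.2.2 then 1 else 0

/-- `g` agrees with a real multivariate polynomial of total degree at most `D`. -/
def IsPolyDeg {σ : Type*} (D : ℕ) (g : (σ → ℝ) → ℝ) : Prop :=
  ∃ p : MvPolynomial σ ℝ, p.totalDegree ≤ D ∧ ∀ x, g x = MvPolynomial.eval x p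

/-- `f : ℝ^N → ℝ^n` is a (deterministic) degree-`D` polynomial. -/
def IsDegPoly (n m k D : ℕ) (f : (Coords n m k → ℝ) → Fin n → ℝ) : Prop :=
  ∀ i : Fin n, IsPolyDeg D (fun x => f x i)

open Classical in
/-- The rounding map: `T` if `x ≥ 1`, `F` if `x ≤ -1`, `err` otherwise. -/
noncomputable def roundR (x : ℝ) : Option Bool :=
  if 1 ≤ x then some true else if x ≤ -1 then some false else none

/-- Expectation over a uniformly random formula. -/
noncomputable def Eform (n m k : ℕ) (g : Formula n m k → ℝ) : ℝ :=
  (∑ Φ : Formula n m k, g Φ) / (Fintype.card (Formula n m k) : ℝ)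

open Classical in
/-- Probability over a uniformly random formula. -/
noncomputable def Pform (n m k : ℕ) (A : Formula n m k → Prop) : ℝ :=
  Eform n m k (fun Φ => if A Φ then 1 else 0)

/-- A deterministic degree-`D` polynomial `(δ,γ,η,ν)`-solves random `k`-SAT. -/
def DetSolves (n m k D : ℕ) (f : (Coords n m k → ℝ) → Fin n → ℝ) (δ γ η ν : ℝ) : Prop :=
  IsDegPoly n m k D f ∧
  1 - δ ≤ Pform n m k (fun Φ => etaNuSat (fun i => roundR (f (encode Φ) i)) Φ η ν) ∧
  Eform n m k (fun Φ => ∑ i, (f (encode Φ) i) ^ 2) ≤ γ * n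

/-- A random degree-`D` polynomial `(δ,γ,η,ν)`-solves random `k`-SAT: `μ` is a
probability measure, every slice is a degree-`D` polynomial with coefficients
measurable in `ω`, and the success-probability and normalization conditions hold. -/
def RandomSolves (n m k D : ℕ) {Ω : Type u} [MeasurableSpace Ω] (μ : Measure Ω)
    (f : (Coords n m k → ℝ) → Ω → Fin n → ℝ) (δ γ η ν : ℝ) : Prop :=
  IsProbabilityMeasure μ ∧
  (∀ ω : Ω, IsDegPoly n m k D (fun x => f x ω)) ∧
  (∀ (x : Coords n m k → ℝ) (i : Fin n), Measurable (fun ω => f x ω i)) ∧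
  (∀ Φ : Formula n m k, Integrable (fun ω => ∑ i, (f (encode Φ) ω i) ^ 2) μ) ∧
  1 - δ ≤ Eform n m k (fun Φ =>
      (μ {ω | etaNuSat (fun i => roundR (f (encode Φ) ω i)) Φ η ν}).toReal) ∧
  Eform n m k (fun Φ => ∫ ω, (∑ i, (f (encode Φ) ω i) ^ 2) ∂μ) ≤ γ * n

/-! ## κ* -/

noncomputable def iota (β : ℝ) : ℝ := β / (1 - β * Real.exp (-(β - 1)))

noncomputable def kappaStar : ℝ := sInf (iota '' Set.Ioi 1)

/-! ## overlap profiles and entropies -/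

/-- Binary entropy function (natural log, with `0·log 0 = 0`). -/
noncomputable def Hb (p : ℝ) : ℝ := Real.negMulLog p + Real.negMulLog (1 - p)

/-- Number of coordinates whose agreement pattern is exactly `σ`. -/
noncomputable def patCount {n ℓ : ℕ} (Y : Fin ℓ → Fin n → Bool) (σ : Fin ℓ → Bool) : ℕ :=
  Nat.card {i : Fin n // ∀ t, Y t i = σ t}

/-- Entry of the overlap profile indexed by the unordered partition `{σ⁻¹(T), σ⁻¹(F)}`. -/
noncomputable def profFrac {n ℓ : ℕ} (Y : Fin ℓ → Fin n → Bool) (σ : Fin ℓ → Bool) : ℝ :=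
  ((patCount Y σ : ℝ) + (patCount Y (fun t => !(σ t)) : ℝ)) / n

/-- Overlap entropy `H(π(Y))` (each unordered partition is counted twice in the sum,
hence the factor `1/2`; valid for `ℓ ≥ 1` assignments). -/
noncomputable def overlapEntropy {n ℓ : ℕ} (Y : Fin ℓ → Fin n → Bool) : ℝ :=
  (1/2) * ∑ σ : Fin ℓ → Bool, Real.negMulLog (profFrac Y σ)

/-- The fraction `λ_{S,T}` of coordinates in the agreement set at which `x` is true. -/
noncomputable def lamFrac {n ℓ : ℕ} (x : Fin n → Bool) (Y : Fin ℓ → Fin n → Bool)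
    (σ : Fin ℓ → Bool) : ℝ :=
  (Nat.card {i : Fin n // ((∀ t, Y t i = σ t) ∨ (∀ t, Y t i = !(σ t))) ∧ x i = true} : ℝ)
    / ((patCount Y σ : ℝ) + (patCount Y (fun t => !(σ t)) : ℝ))

/-- Conditional overlap entropy `H(π(x | Y))`. -/
noncomputable def condOverlapEntropy {n ℓ : ℕ} (x : Fin n → Bool)
    (Y : Fin ℓ → Fin n → Bool) : ℝ :=
  (1/2) * ∑ σ : Fin ℓ → Bool, profFrac Y σ * Hb (lamFrac x Y σ)

/-- `H(π(y^ℓ | y^0, …, y^{ℓ-1}))` for an `ℕ`-indexed family of assignments. -/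
noncomputable def condH {n : ℕ} (y : ℕ → Fin n → Bool) (ℓ : ℕ) : ℝ :=
  condOverlapEntropy (y ℓ) (fun t : Fin ℓ => y (t : ℕ))

/-- `H(π(y^0, …, y^k))`. -/
noncomputable def ovH {n : ℕ} (y : ℕ → Fin n → Bool) (k : ℕ) : ℝ :=
  overlapEntropy (fun t : Fin (k+1) => y (t : ℕ))

/-- The energy term `E_{I ~ unif([n]^k)} |{y^ℓ[I] : 0 ≤ ℓ ≤ k}|`. -/
noncomputable def energy {n : ℕ} (k : ℕ) (y : ℕ → Fin n → Bool) : ℝ :=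
  (∑ I : Fin k → Fin n,
      (((Finset.range (k+1)).image (fun ℓ => fun r => y ℓ (I r))).card : ℝ))
    / (Fintype.card (Fin k → Fin n) : ℝ)

/-- Conditional overlap entropies of `y^1, …, y^k` within `[β₋ log k / k, β₊ log k / k]`. -/
def Admissible {n : ℕ} (k : ℕ) (βm βp : ℝ) (y : ℕ → Fin n → Bool) : Prop :=
  ∀ ℓ, 1 ≤ ℓ → ℓ ≤ k →
    condH y ℓ ∈ Set.Icc (βm * Real.log k / k) (βp * Real.log k / k)

/-! ## the interpolation path -/

/-- The interpolation path: step `t+1` resamples the literal at lexicographic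
position `t % (km)` (0-indexed: clause `(t % km)/k`, position `(t % km) % k`)
to the value `w ⟨t, _⟩`. -/
def interpPath {n m k T : ℕ} (Φ0 : Formula n m k) (w : Fin T → Fin n × Bool) :
    ℕ → Formula n m k
  | 0 => Φ0
  | t + 1 => fun a b =>
      if h : t < T ∧ (a : ℕ) = t % (k * m) / k ∧ (b : ℕ) = t % (k * m) % k
      then w ⟨t, h.1⟩
      else interpPath Φ0 w t a b

open Classical in
/-- Probability of an event of the interpolation path `Φ^(0), …, Φ^(T)`, where
`Φ^(0)` is uniform and all resampled literals are i.i.d. uniform. -/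
noncomputable def Ppath (n m k T : ℕ) (A : (ℕ → Formula n m k) → Prop) : ℝ :=
  (∑ z : Formula n m k × (Fin T → Fin n × Bool),
      if A (interpPath z.1 z.2) then (1:ℝ) else 0)
    / (Fintype.card (Formula n m k × (Fin T → Fin n × Bool)) : ℝ)

/-! ## stability of low-degree polynomials -/

/-- The pair `(Φ, Φ')` is `c`-bad with respect to `f`. -/
def cBad {n m k : ℕ} (f : (Coords n m k → ℝ) → Fin n → ℝ) (c : ℝ)
    (Φ Φ' : Formula n m k) : Prop :=
  c * Eform n m k (fun Ψ => ∑ i, (f (encode Ψ) i) ^ 2) <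
    ∑ i, (f (encode Φ) i - f (encode Φ') i) ^ 2

/-- Replace the literal of `Φ` in clause `a`, position `b`, by `L`. -/
def updLit {n m k : ℕ} (Φ : Formula n m k) (a : Fin m) (b : Fin k)
    (L : Fin n × Bool) : Formula n m k :=
  fun i j => if i = a ∧ j = b then L else Φ i j

open Classical in
/-- `λ_j`: the probability that resampling the literal at clause `a`, position `b`
(uniformly among the `2n-1` other literals) produces a `c`-bad pair. -/
noncomputable def lambdaPos {n m k : ℕ} (f : (Coords n m k → ℝ) → Fin n → ℝ) (c : ℝ)
    (a : Fin m) (b : Fin k) : ℝ :=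
  (∑ Φ : Formula n m k, ∑ L : Fin n × Bool,
      if L ≠ Φ a b ∧ cBad f c Φ (updLit Φ a b L) then (1:ℝ) else 0)
    / ((Fintype.card (Formula n m k) : ℝ) * (2 * (n:ℝ) - 1))

/-! ## the p/q quantities of the energy analysis -/

/-- The history vector `y^{≤j}_i = (y^1_i, …, y^j_i)`. -/
def hist {n : ℕ} (y : ℕ → Fin n → Bool) (j : ℕ) (i : Fin n) : Fin j → Bool :=
  fun t => y ((t : ℕ) + 1) i

/-- `φ_ℓ(b | ξ) = P_{i ~ unif([n])}[y^ℓ_i = b | y^{≤ℓ-1}_i = ξ]`. -/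
noncomputable def phi {n : ℕ} (y : ℕ → Fin n → Bool) (ℓ : ℕ) (b : Bool)
    (ξ : Fin (ℓ - 1) → Bool) : ℝ :=
  (Nat.card {i : Fin n // y ℓ i = b ∧ hist y (ℓ - 1) i = ξ} : ℝ) /
    (Nat.card {i : Fin n // hist y (ℓ - 1) i = ξ} : ℝ)

open Classical in
/-- `p_ℓ(σ) = P_{I ~ unif([n]^k)}[y^{ℓ'}[I] = σ for some 0 ≤ ℓ' ≤ ℓ]`. -/
noncomputable def pP {n : ℕ} (k : ℕ) (y : ℕ → Fin n → Bool) (ℓ : ℕ)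
    (σ : Fin k → Bool) : ℝ :=
  (∑ I : Fin k → Fin n, if ∃ ℓ' ≤ ℓ, ∀ r, y ℓ' (I r) = σ r then (1:ℝ) else 0)
    / (Fintype.card (Fin k → Fin n) : ℝ)

open Classical in
/-- `Q_ℓ(σ, I)`: the truncated conditional probability that `y^ℓ[I] = σ`. -/
noncomputable def Qfun {n k : ℕ} (y : ℕ → Fin n → Bool) (ℓ : ℕ) (σ : Fin k → Bool)
    (I : Fin k → Fin n) : ℝ :=
  if (∏ r, phi y ℓ (σ r) (hist y (ℓ - 1) (I r))) ≤ 1 / ((k:ℝ) * Real.log k)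
  then ∏ r, phi y ℓ (σ r) (hist y (ℓ - 1) (I r)) else 0

/-- `q_ℓ(σ) = E_{I ~ unif([n]^k)}[Q_ℓ(σ, I)]`. -/
noncomputable def qfun {n k : ℕ} (y : ℕ → Fin n → Bool) (ℓ : ℕ) (σ : Fin k → Bool) : ℝ :=
  (∑ I : Fin k → Fin n, Qfun y ℓ σ I) / (Fintype.card (Fin k → Fin n) : ℝ)

/-! ## lazy random walk on a product graph -/

/-- Lazy random walk on `Σ^J`: step `t+1` resamples coordinate `σ (t+1)` to `u ⟨t, _⟩`. -/
def walk {S : Type u} {J : Type*} [DecidableEq J] {T : ℕ} (v0 : J → S) (σ : ℕ → J)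
    (u : Fin T → S) : ℕ → (J → S)
  | 0 => v0
  | t + 1 => if h : t < T then Function.update (walk v0 σ u t) (σ (t+1)) (u ⟨t, h⟩)
             else walk v0 σ u t

open Classical in
/-- `λ_j`: fraction of edges in direction `j` that are bad. -/
noncomputable def lambdaDir {S : Type u} [Fintype S] {J : ℕ}
    (B : (Fin J → S) → (Fin J → S) → Prop) (j : Fin J) : ℝ :=
  (∑ v : Fin J → S, ∑ s : S,
      if s ≠ v j ∧ B v (Function.update v j s) then (1:ℝ) else 0)
    / ((Fintype.card (Fin J → S) : ℝ) * ((Fintype.card S : ℝ) - 1))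

open Classical in
/-- Probability that no step of the lazy random walk traverses a bad edge. -/
noncomputable def PwalkGood {S : Type u} [Fintype S] (J T : ℕ)
    (B : (Fin J → S) → (Fin J → S) → Prop) (σ : ℕ → Fin J) : ℝ :=
  (∑ z : (Fin J → S) × (Fin T → S),
      if ∀ t, 1 ≤ t → t ≤ T →
          (walk z.1 σ z.2 t = walk z.1 σ z.2 (t-1) ∨
           ¬ B (walk z.1 σ z.2 (t-1)) (walk z.1 σ z.2 t))
      then (1:ℝ) else 0)
    / (Fintype.card ((Fin J → S) × (Fin T → S)) : ℝ)

/-! ## block interpolation -/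

/-- The index `i` of the segment `[s_i, s_{i+1})` containing `r`. -/
def psiIdx (s : ℕ → ℕ) (k r : ℕ) : ℕ := Nat.findGreatest (fun i => s i ≤ r) k

/-- `Ψ^ℓ`: concatenation of the blocks `ξ_i^{max(ℓ-i,0)}`, realized on the canonical
product space of `(k+1)²` independent `μ^{⊗M}`-samples. -/
def Psi {Υ : Type u} (s : ℕ → ℕ) (k M : ℕ)
    (ω : Fin (k+1) × Fin (k+1) → Fin M → Υ) (ℓ : ℕ) : Fin M → Υ :=
  fun r => ω (⟨min (psiIdx s k (r : ℕ)) k, by omega⟩,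
              ⟨min (ℓ - psiIdx s k (r : ℕ)) k, by omega⟩) r

/-!
Compare with the walk that refuses bad edges: resampling coordinate `j` of `v` to `s` moves to
`update v j s` unless that edge is bad, in which case it stays at `v`. Since `B` is symmetric,
`(v, s) ↦ (update v j s, v j)` is an involution exchanging the rejected moves, so this rejecting
walk still preserves the uniform distribution on `Σ^J`. Write `q = |Σ|` and `N = q^J`. If `m`
values of `s` keep the rejecting walk at `v`, the number of good continuations from `v` is a
sum over `s` of the counts at `rejectStep v s` in which those `m` terms are divided by `m`.
Concavity of `log` and stationarity turn this into a lower bound on the sum over `v` of the log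
of the number of good walks from `v`; each step in direction `j` loses `∑ v, m log m / q`, which
convexity of `x log x` on `[1, q]` bounds by `N log q · λ_j`. One more application of Jensen's
inequality, over the starting vertex, gives the claim.
-/

namespace LazyWalk

open Real Function

lemma sum_log_le_card_mul_log_sum_div {α : Type*} [Fintype α] [Nonempty α] (x : α → ℝ)
    (hx : ∀ a, 0 < x a) :
    ∑ a, log (x a) ≤ Fintype.card α * log ((∑ a, x a) / Fintype.card α) := by
  have hn : (0 : ℝ) < Fintype.card α := by exact_mod_cast Fintype.card_pos
  have h := strictConcaveOn_log_Ioi.concaveOn.le_map_sum (t := univ)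
    (w := fun _ => (Fintype.card α : ℝ)⁻¹) (p := x) (fun _ _ => by positivity)
    (by simp [card_univ, hn.ne']) (fun a _ => hx a)
  simp only [smul_eq_mul, ← mul_sum] at h
  rw [div_eq_inv_mul]
  rwa [inv_mul_le_iff₀ hn] at h

lemma mul_log_le_of_mem_Icc {q x : ℝ} (hq : 1 < q) (hx1 : 1 ≤ x) (hxq : x ≤ q) :
    x * log x ≤ (x - 1) / (q - 1) * (q * log q) := by
  have hq1 : 0 < q - 1 := by linarith
  have h := convexOn_mul_log.2 (Set.mem_Ici.2 zero_le_one) (Set.mem_Ici.2 (by linarith : 0 ≤ q))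
    (div_nonneg (by linarith : 0 ≤ q - x) hq1.le) (div_nonneg (by linarith : 0 ≤ x - 1) hq1.le)
    (by rw [← add_div, div_eq_one_iff_eq hq1.ne']; ring)
  have hx : ((q - x) / (q - 1)) • (1 : ℝ) + ((x - 1) / (q - 1)) • q = x := by
    rw [smul_eq_mul, smul_eq_mul, mul_one, div_mul_eq_mul_div, ← add_div,
      div_eq_iff hq1.ne']
    ring
  rw [hx] at h
  simpa using h

section Walk

variable {ι S : Type*} [DecidableEq ι] (B : (ι → S) → (ι → S) → Prop)

def GoodStep (v w : ι → S) : Prop := w = v ∨ ¬ B v w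

def IsGoodWalk {T : ℕ} (v : ι → S) (σ : ℕ → ι) (u : Fin T → S) : Prop :=
  ∀ t < T, GoodStep B (walk v σ u t) (walk v σ u (t + 1))

lemma walk_cons_succ {T : ℕ} (v : ι → S) (σ : ℕ → ι) (s : S) (u : Fin T → S) (t : ℕ) :
    walk v σ (Fin.cons s u : Fin (T + 1) → S) (t + 1) =
      walk (update v (σ 1) s) (fun i => σ (i + 1)) u t := by
  induction t with
  | zero => rfl
  | succ t ih =>
    rw [walk.eq_2 v σ _ (t + 1), walk.eq_2 _ _ u t, ih]
    by_cases ht : t < T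
    · rw [dif_pos (by omega), dif_pos ht]
      rfl
    · rw [dif_neg (by omega), dif_neg ht]

lemma isGoodWalk_cons_iff {T : ℕ} (v : ι → S) (σ : ℕ → ι) (s : S) (u : Fin T → S) :
    IsGoodWalk B v σ (Fin.cons s u : Fin (T + 1) → S) ↔
      GoodStep B v (update v (σ 1) s) ∧
        IsGoodWalk B (update v (σ 1) s) (fun i => σ (i + 1)) u := by
  simp only [IsGoodWalk, Nat.forall_lt_succ_left, walk_cons_succ]
  rfl

variable [Fintype S]

open Classical in
noncomputable def goodCount (T : ℕ) (σ : ℕ → ι) (v : ι → S) : ℕ :=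
  #{u : Fin T → S | IsGoodWalk B v σ u}

open Classical in
lemma goodCount_succ (T : ℕ) (σ : ℕ → ι) (v : ι → S) :
    goodCount B (T + 1) σ v = ∑ s, if GoodStep B v (update v (σ 1) s)
      then goodCount B T (fun i => σ (i + 1)) (update v (σ 1) s) else 0 := by
  rw [goodCount, card_filter, ← (Fin.consEquiv fun _ => S).sum_comp, Fintype.sum_prod_type]
  refine sum_congr rfl fun s _ => ?_
  rw [goodCount, card_filter, ite_sum_zero]
  refine sum_congr rfl fun u _ => ?_
  rw [← ite_and]
  exact if_congr (isGoodWalk_cons_iff B v σ s u) rfl rfl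

lemma goodCount_pos (T : ℕ) (σ : ℕ → ι) (v : ι → S) : 0 < goodCount B T σ v := by
  induction T generalizing σ v with
  | zero => simp [goodCount, IsGoodWalk]
  | succ T ih =>
    rw [goodCount_succ]
    refine lt_of_lt_of_le ?_ (single_le_sum (fun _ _ => Nat.zero_le _) (mem_univ (v (σ 1))))
    simpa [GoodStep] using ih _ v

end Walk

section OneStep

variable {ι S : Type*} [DecidableEq ι] [Fintype S] (B : (ι → S) → (ι → S) → Prop) (j : ι)

open Classical in
noncomputable def stays (v : ι → S) : Finset S := {s | s = v j ∨ B v (update v j s)}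

open Classical in
noncomputable def rejectStep (v : ι → S) (s : S) : ι → S :=
  if B v (update v j s) then v else update v j s

variable {B j}

lemma mem_stays_self (v : ι → S) : v j ∈ stays B j v := by
  simp [stays]

lemma rejectStep_of_mem_stays {v : ι → S} {s : S} (hs : s ∈ stays B j v) :
    rejectStep B j v s = v := by
  simp only [stays, mem_filter, mem_univ, true_and] at hs
  rcases hs with rfl | hB
  · simp [rejectStep]
  · simp [rejectStep, hB]

lemma rejectStep_of_notMem_stays {v : ι → S} {s : S} (hs : s ∉ stays B j v) :
    rejectStep B j v s = update v j s := by
  simp only [stays, mem_filter, mem_univ, true_and, not_or] at hs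
  simp [rejectStep, hs.2]

lemma goodStep_update_iff_of_mem_stays {v : ι → S} {s : S} (hs : s ∈ stays B j v) :
    GoodStep B v (update v j s) ↔ s = v j := by
  simp only [stays, mem_filter, mem_univ, true_and] at hs
  rw [GoodStep, update_eq_self_iff]
  tauto

lemma goodStep_update_of_notMem_stays {v : ι → S} {s : S} (hs : s ∉ stays B j v) :
    GoodStep B v (update v j s) := by
  simp only [stays, mem_filter, mem_univ, true_and, not_or] at hs
  exact Or.inr hs.2

variable (B j)

open Classical in
lemma card_stays (v : ι → S) :
    #(stays B j v) = #{s | s ≠ v j ∧ B v (update v j s)} + 1 := by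
  rw [← card_insert_of_notMem (by simp : v j ∉ ({s | s ≠ v j ∧ B v (update v j s)} : Finset S))]
  congr 1
  ext s
  by_cases hs : s = v j <;> simp [stays, hs]

lemma sum_rejectStep [Fintype ι] (hB : ∀ v w, B v w → B w v) (h : (ι → S) → ℝ) :
    ∑ v, ∑ s, h (rejectStep B j v s) = Fintype.card S * ∑ v, h v := by
  classical
  let swap : (ι → S) × S → (ι → S) × S := fun p => (update p.1 j p.2, p.1 j)
  have hswap : Involutive swap := fun p => by simp [swap]
  calc ∑ v, ∑ s, h (rejectStep B j v s)
      = ∑ p : (ι → S) × S, (if B p.1 (update p.1 j p.2) then h p.1 else 0) +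
          ∑ p : (ι → S) × S, if B p.1 (update p.1 j p.2) then 0 else h (update p.1 j p.2) := by
        rw [← sum_add_distrib, Fintype.sum_prod_type]
        refine sum_congr rfl fun v _ => sum_congr rfl fun s _ => ?_
        unfold rejectStep
        split_ifs <;> simp
    _ = ∑ p : (ι → S) × S, (if B p.1 (update p.1 j p.2) then h p.1 else 0) +
          ∑ p : (ι → S) × S, if B p.1 (update p.1 j p.2) then 0 else h p.1 := by
        congr 1
        refine Fintype.sum_bijective swap hswap.bijective _ _ fun p => ?_
        simp only [swap, update_idem, update_eq_self]
        exact if_congr ⟨hB _ _, hB _ _⟩ rfl rfl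
    _ = Fintype.card S * ∑ v, h v := by
        rw [← sum_add_distrib, Fintype.sum_prod_type, mul_sum]
        refine sum_congr rfl fun v _ => ?_
        simp [ite_add_ite]

open Classical in
lemma sum_goodStep_eq_sum_ite_mem_stays (F : (ι → S) → ℝ) (v : ι → S) :
    ∑ s, (if GoodStep B v (update v j s) then F (update v j s) else 0) =
      ∑ s, if s ∈ stays B j v then F v / #(stays B j v) else F (update v j s) := by
  have hm : (#(stays B j v) : ℝ) ≠ 0 :=
    Nat.cast_ne_zero.mpr (card_ne_zero_of_mem (mem_stays_self v))
  rw [← sum_add_sum_compl (stays B j v), ← sum_add_sum_compl (stays B j v) (fun s => ite _ _ _)]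
  congr 1
  · rw [sum_congr rfl fun s hs => if_pos hs, sum_const, nsmul_eq_mul, mul_div_cancel₀ _ hm,
      sum_congr rfl fun s hs => if_congr (goodStep_update_iff_of_mem_stays hs) rfl rfl,
      sum_ite_eq', if_pos (mem_stays_self v), update_eq_self]
  · refine sum_congr rfl fun s hs => ?_
    rw [mem_compl] at hs
    rw [if_neg hs, if_pos (goodStep_update_of_notMem_stays hs)]

open Classical in
lemma sum_log_ite_mem_stays (F : (ι → S) → ℝ) (hF : ∀ w, 0 < F w) (v : ι → S) :
    ∑ s, log (if s ∈ stays B j v then F v / #(stays B j v) else F (update v j s)) =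
      ∑ s, log (F (rejectStep B j v s)) - (#(stays B j v) : ℝ) * log #(stays B j v) := by
  have hm : (#(stays B j v) : ℝ) ≠ 0 :=
    Nat.cast_ne_zero.mpr (card_ne_zero_of_mem (mem_stays_self v))
  rw [← sum_add_sum_compl (stays B j v), ← sum_add_sum_compl (stays B j v) (fun s => log _)]
  have hstay : ∀ s ∈ stays B j v, log (if s ∈ stays B j v then F v / #(stays B j v)
      else F (update v j s)) = log (F (rejectStep B j v s)) - log #(stays B j v) := fun s hs => by
    rw [if_pos hs, log_div (hF v).ne' hm, rejectStep_of_mem_stays hs]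
  have hmove : ∀ s ∈ (stays B j v)ᶜ, log (if s ∈ stays B j v then F v / #(stays B j v)
      else F (update v j s)) = log (F (rejectStep B j v s)) := fun s hs => by
    rw [mem_compl] at hs
    rw [if_neg hs, rejectStep_of_notMem_stays hs]
  rw [sum_congr rfl hstay, sum_congr rfl hmove, sum_sub_distrib, sum_const, nsmul_eq_mul]
  ring

open Classical in
lemma sum_log_rejectStep_le (F : (ι → S) → ℝ) (hF : ∀ w, 0 < F w) (v : ι → S) :
    ∑ s, log (F (rejectStep B j v s)) - (#(stays B j v) : ℝ) * log #(stays B j v) +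
        Fintype.card S * log (Fintype.card S) ≤
      Fintype.card S * log (∑ s, if GoodStep B v (update v j s) then F (update v j s) else 0) := by
  have : Nonempty S := ⟨v j⟩
  have hm : (0 : ℝ) < #(stays B j v) := Nat.cast_pos.mpr (card_pos.mpr ⟨_, mem_stays_self v⟩)
  have hx : ∀ s, 0 < if s ∈ stays B j v then F v / #(stays B j v) else F (update v j s) :=
    fun s => by split_ifs; exacts [div_pos (hF v) hm, hF _]
  have hjensen := sum_log_le_card_mul_log_sum_div _ hx
  rw [sum_log_ite_mem_stays B j F hF v,
    log_div (sum_pos (fun s _ => hx s) univ_nonempty).ne' (by positivity),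
    ← sum_goodStep_eq_sum_ite_mem_stays] at hjensen
  linarith

open Classical in
lemma le_sum_log_sum_goodStep [Fintype ι] [Nonempty S] (hB : ∀ v w, B v w → B w v)
    (F : (ι → S) → ℝ) (hF : ∀ w, 0 < F w) :
    ∑ v, log (F v) + Fintype.card (ι → S) * log (Fintype.card S) -
        (∑ v, (#(stays B j v) : ℝ) * log #(stays B j v)) / Fintype.card S ≤
      ∑ v, log (∑ s, if GoodStep B v (update v j s) then F (update v j s) else 0) := by
  have hq : (0 : ℝ) < Fintype.card S := by exact_mod_cast Fintype.card_pos
  have key := sum_le_sum fun v (_ : v ∈ univ) => sum_log_rejectStep_le B j F hF v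
  rw [sum_add_distrib, sum_sub_distrib, sum_rejectStep B j hB (fun w => log (F w)), ← mul_sum,
    sum_const, card_univ, nsmul_eq_mul, ← mul_sum] at key
  rw [sub_le_iff_le_add, ← sub_le_iff_le_add', le_div_iff₀ hq]
  linarith

end OneStep

variable {S : Type*} [Fintype S] {J : ℕ} (B : (Fin J → S) → (Fin J → S) → Prop)

lemma sum_card_stays_sub_one (hS : 2 ≤ Fintype.card S) (j : Fin J) :
    ∑ v, ((#(stays B j v) : ℝ) - 1) =
      lambdaDir B j * (Fintype.card (Fin J → S) * (Fintype.card S - 1)) := by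
  have : Nonempty S := Fintype.card_pos_iff.mp (by omega)
  have hq : (1 : ℝ) < Fintype.card S := by exact_mod_cast hS
  have hN : (0 : ℝ) < Fintype.card (Fin J → S) := by exact_mod_cast Fintype.card_pos
  rw [lambdaDir, div_mul_cancel₀ _ (by nlinarith)]
  refine sum_congr rfl fun v _ => ?_
  rw [card_stays, Nat.cast_add, Nat.cast_one, add_sub_cancel_right, natCast_card_filter]

lemma sum_mul_log_card_stays_le (hS : 2 ≤ Fintype.card S) (j : Fin J) :
    (∑ v, (#(stays B j v) : ℝ) * log #(stays B j v)) / Fintype.card S ≤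
      Fintype.card (Fin J → S) * log (Fintype.card S) * lambdaDir B j := by
  have hq : (1 : ℝ) < Fintype.card S := by exact_mod_cast hS
  have hchord : ∀ v, (#(stays B j v) : ℝ) * log #(stays B j v) ≤
      ((#(stays B j v) : ℝ) - 1) / (Fintype.card S - 1) * (Fintype.card S * log (Fintype.card S)) :=
    fun v => mul_log_le_of_mem_Icc hq
      (by exact_mod_cast card_pos.mpr ⟨_, mem_stays_self v⟩) (by exact_mod_cast card_le_univ _)
  rw [div_le_iff₀ (by linarith)]
  refine (sum_le_sum fun v _ => hchord v).trans_eq ?_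
  have hq1 : (Fintype.card S : ℝ) - 1 ≠ 0 := by linarith
  rw [← sum_mul, ← sum_div, sum_card_stays_sub_one B hS]
  field_simp

lemma pwalkGood_eq_sum_goodCount (T : ℕ) (σ : ℕ → Fin J) :
    PwalkGood J T B σ =
      (∑ v, (goodCount B T σ v : ℝ)) / (Fintype.card (Fin J → S) * Fintype.card S ^ T) := by
  classical
  have hgood : ∀ (v : Fin J → S) (u : Fin T → S),
      (∀ t, 1 ≤ t → t ≤ T → (walk v σ u t = walk v σ u (t - 1) ∨
        ¬ B (walk v σ u (t - 1)) (walk v σ u t))) ↔ IsGoodWalk B v σ u := fun v u => by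
    refine ⟨fun h t ht => h (t + 1) (by omega) ht, fun h t ht1 htT => ?_⟩
    obtain ⟨t, rfl⟩ : ∃ t', t = t' + 1 := ⟨t - 1, by omega⟩
    exact h t htT
  rw [PwalkGood, Fintype.sum_prod_type]
  simp only [Fintype.card_prod, Fintype.card_fun, Fintype.card_fin]
  push_cast
  congr 1
  refine sum_congr rfl fun v _ => ?_
  rw [goodCount, natCast_card_filter]
  exact sum_congr rfl fun u _ => if_congr (hgood v u) rfl rfl

lemma le_sum_log_goodCount (hS : 2 ≤ Fintype.card S) (hB : ∀ v w, B v w → B w v) (T : ℕ)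
    (σ : ℕ → Fin J) :
    Fintype.card (Fin J → S) * log (Fintype.card S) * ∑ t ∈ range T, (1 - lambdaDir B (σ (t + 1)))
      ≤ ∑ v, log (goodCount B T σ v) := by
  classical
  have : Nonempty S := Fintype.card_pos_iff.mp (by omega)
  induction T generalizing σ with
  | zero => simp [goodCount, IsGoodWalk]
  | succ T ih =>
    have hstep := le_sum_log_sum_goodStep B (σ 1) hB
      (fun w => (goodCount B T (fun i => σ (i + 1)) w : ℝ))
      fun w => Nat.cast_pos.mpr (goodCount_pos B T _ w)
    have hstays := sum_mul_log_card_stays_le B hS (σ 1)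
    have hcount : ∀ v, (goodCount B (T + 1) σ v : ℝ) = ∑ s,
        if GoodStep B v (update v (σ 1) s)
        then (goodCount B T (fun i => σ (i + 1)) (update v (σ 1) s) : ℝ) else 0 := fun v => by
      rw [goodCount_succ]
      push_cast
      rfl
    simp only [hcount, sum_range_succ']
    linarith [ih fun i => σ (i + 1)]

lemma rpow_le_sum_goodCount_div (hS : 2 ≤ Fintype.card S) (hB : ∀ v w, B v w → B w v) (T : ℕ)
    (σ : ℕ → Fin J) :
    (Fintype.card S : ℝ) ^ ∑ t ∈ range T, (1 - lambdaDir B (σ (t + 1))) ≤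
      (∑ v, (goodCount B T σ v : ℝ)) / Fintype.card (Fin J → S) := by
  have : Nonempty S := Fintype.card_pos_iff.mp (by omega)
  have hF : ∀ v, (0 : ℝ) < goodCount B T σ v := fun v => Nat.cast_pos.mpr (goodCount_pos B T σ v)
  have hN : (0 : ℝ) < Fintype.card (Fin J → S) := by positivity
  rw [rpow_def_of_pos (by positivity),
    ← le_log_iff_exp_le (div_pos (sum_pos (fun v _ => hF v) univ_nonempty) hN)]
  have hjensen := sum_log_le_card_mul_log_sum_div _ hF
  have hsum := le_sum_log_goodCount B hS hB T σ
  exact le_of_mul_le_mul_left (by linarith) hN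

end LazyWalk

open LazyWalk Real in
theorem statement17_general {S : Type u} [Fintype S] (hS : 2 ≤ Fintype.card S)
    (J T : ℕ)
    (B : (Fin J → S) → (Fin J → S) → Prop) (hB : ∀ v w, B v w → B w v)
    (σ : ℕ → Fin J) :
    (Fintype.card S : ℝ) ^ (-(∑ t ∈ Finset.Icc 1 T, lambdaDir B (σ t))) ≤
      PwalkGood J T B σ := by
  have : Nonempty S := Fintype.card_pos_iff.mp (by omega)
  have hexponent : ∑ t ∈ range T, (1 - lambdaDir B (σ (t + 1))) =
      -(∑ t ∈ Icc 1 T, lambdaDir B (σ t)) + T := by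
    rw [sum_sub_distrib, sum_const, card_range, nsmul_one, ← Ico_add_one_right_eq_Icc,
      sum_Ico_eq_sum_range, Nat.add_sub_cancel]
    simp only [add_comm 1]
    ring
  rw [pwalkGood_eq_sum_goodCount, ← div_div, le_div_iff₀ (by positivity), ← rpow_natCast,
    ← rpow_add (by positivity), ← hexponent]
  exact rpow_le_sum_goodCount_div B hS hB T σ

theorem statement17 {S : Type u} [Fintype S] [DecidableEq S] (hS : 2 ≤ Fintype.card S)
    (J T : ℕ) (hJ : 0 < J) (hT : 0 < T)
    (B : (Fin J → S) → (Fin J → S) → Prop) (hB : ∀ v w, B v w → B w v)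
    (σ : ℕ → Fin J) :
    (Fintype.card S : ℝ) ^ (-(∑ t ∈ Finset.Icc 1 T, lambdaDir B (σ t))) ≤
      PwalkGood J T B σ :=
  statement17_general hS J T B hB σ
end

section
/- Let (Υ,μ) be a probability space, let k and M be positive integers, and let 0 = s₀ ≤ s₁ ≤ … ≤ s_k ≤ s_{k+1} = M be integers. Let {ξ_i^j : 0 ≤ i ≤ k, 0 ≤ j ≤ k} be mutually independent random blocks, where each ξ_i^j is distributed as μ^{⊗(s_{i+1}−s_i)} (a block of s_{i+1}−s_i i.i.d. μ-samples). For 0 ≤ ℓ ≤ k define Ψ^ℓ ∈ Υ^M as the concatenation Ψ^ℓ = (ξ_0^{m(ℓ,0)}, ξ_1^{m(ℓ,1)}, …, ξ_k^{m(ℓ,k)}) where m(ℓ,i) = max(ℓ−i, 0); in particular each Ψ^ℓ is distributed as μ^{⊗M}. Then for every measurable function f : Υ^M → [0,1], E[Π_{ℓ=0}^k f(Ψ^ℓ)] ≥ (∫ f dμ^{⊗M})^{k+1}. -/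
open MeasureTheory Finset Filter ProbabilityTheory

universe u

/-!
Let `x = Ψ^0`. For `ℓ ≥ 1`, `Ψ^ℓ` agrees with `x` from coordinate `s_ℓ` on and is a fresh sample
on the coordinates below `s_ℓ`, independently for different `ℓ`. Hence the expectation equals
`∫ ∏_ℓ g_ℓ`, where `g_ℓ x` is the average of `f` after resampling the coordinates of `x` below
`s_ℓ`, i.e. the conditional expectation of `f` given the coordinates from `s_ℓ` on.
The resampled sets increase with `ℓ`, so `g_{t+1}` is the `s_{t+1}`-average of `g_t`, and each
`g_ℓ` with `ℓ > t` is invariant under that average. By Jensen, `A_t = ∫ g_t^{t+1} ∏_{ℓ>t} g_ℓ`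
satisfies `A_{t+1} ≤ A_t`, and `(∫ f)^{k+1} = (∫ g_k)^{k+1} ≤ A_k ≤ A_0 = ∫ ∏_ℓ g_ℓ`.
-/

lemma Set.piecewise_piecewise_of_subset {ι : Type*} {α : ι → Type*} {S T : Set ι}
    [DecidablePred (· ∈ S)] [DecidablePred (· ∈ T)] (hST : S ⊆ T) (v u x : (i : ι) → α i) :
    S.piecewise v (T.piecewise u x) = T.piecewise (S.piecewise v u) x := by
  ext i
  by_cases hS : i ∈ S
  · simp [hS, hST hS]
  · by_cases hT : i ∈ T <;> simp [hS, hT]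

lemma Set.piecewise_piecewise_of_subset_right {ι : Type*} {α : ι → Type*} {S T : Set ι}
    [DecidablePred (· ∈ S)] [DecidablePred (· ∈ T)] (hTS : T ⊆ S) (v u x : (i : ι) → α i) :
    S.piecewise v (T.piecewise u x) = S.piecewise v x := by
  ext i
  by_cases hS : i ∈ S
  · simp [hS]
  · simp [hS, mt (@hTS i) hS]

section UnitInterval

variable {X : Type*} [MeasurableSpace X] {ρ : Measure X} {h : X → ℝ}

lemma integrable_of_mem_unitInterval [IsFiniteMeasure ρ] (hm : Measurable h)
    (h01 : ∀ x, h x ∈ unitInterval) : Integrable h ρ :=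
  .of_bound hm.aestronglyMeasurable 1 <| ae_of_all _ fun x => by
    rw [Real.norm_eq_abs, abs_le]
    exact ⟨by linarith [(h01 x).1], (h01 x).2⟩

variable [IsProbabilityMeasure ρ]

lemma integral_mem_unitInterval (hm : Measurable h) (h01 : ∀ x, h x ∈ unitInterval) :
    ∫ x, h x ∂ρ ∈ unitInterval := by
  refine ⟨integral_nonneg fun x => (h01 x).1, ?_⟩
  calc ∫ x, h x ∂ρ ≤ ∫ _, (1 : ℝ) ∂ρ :=
        integral_mono (integrable_of_mem_unitInterval hm h01) (integrable_const 1)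
          fun x => (h01 x).2
    _ = 1 := by simp

lemma pow_integral_le_integral_pow (hm : Measurable h) (h01 : ∀ x, h x ∈ unitInterval) (n : ℕ) :
    (∫ x, h x ∂ρ) ^ n ≤ ∫ x, h x ^ n ∂ρ :=
  (convexOn_pow n).map_integral_le (continuous_pow n).continuousOn isClosed_Ici
    (ae_of_all _ fun x => (h01 x).1) (integrable_of_mem_unitInterval hm h01)
    (integrable_of_mem_unitInterval (hm.pow_const n) fun x =>
      pow_mem (S := unitInterval.submonoid) (h01 x) n)

end UnitInterval

lemma MeasureTheory.MeasurePreserving.integral_comp_of_aestronglyMeasurable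
    {X Y : Type*} [MeasurableSpace X] [MeasurableSpace Y] {ρ : Measure X} {ν : Measure Y}
    {φ : X → Y} (hφ : MeasurePreserving φ ρ ν) {g : Y → ℝ} (hg : AEStronglyMeasurable g ν) :
    ∫ x, g (φ x) ∂ρ = ∫ y, g y ∂ν := by
  rw [← hφ.map_eq] at hg ⊢
  exact (integral_map hφ.measurable.aemeasurable hg).symm

section Resampling

variable {ι : Type*} {α : ι → Type*} [∀ i, MeasurableSpace (α i)]

@[fun_prop]
lemma Measurable.set_piecewise {X : Type*} [MeasurableSpace X] (S : Set ι)
    [DecidablePred (· ∈ S)] {u x : X → (i : ι) → α i} (hu : Measurable u) (hx : Measurable x) :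
    Measurable fun a => S.piecewise (u a) (x a) := by
  refine measurable_pi_lambda _ fun i => ?_
  by_cases hi : i ∈ S <;> simp only [Set.piecewise, hi, if_true, if_false] <;> fun_prop

variable [Fintype ι] (μ : (i : ι) → Measure (α i))

/-- The conditional expectation of `f` given the coordinates outside `S`. -/
noncomputable def resampleMean (S : Set ι) [DecidablePred (· ∈ S)]
    (f : ((i : ι) → α i) → ℝ) (x : (i : ι) → α i) : ℝ :=
  ∫ u, f (S.piecewise u x) ∂Measure.pi μ

variable {f : ((i : ι) → α i) → ℝ}

lemma resampleMean_mul_of_forall_piecewise_eq (S : Set ι) [DecidablePred (· ∈ S)]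
    {h : ((i : ι) → α i) → ℝ} (hS : ∀ u x, h (S.piecewise u x) = h x) (x : (i : ι) → α i) :
    resampleMean μ S (fun y => f y * h y) x = resampleMean μ S f x * h x := by
  simp only [resampleMean, hS, integral_mul_const]

lemma resampleMean_piecewise_of_subset {S T : Set ι} [DecidablePred (· ∈ S)]
    [DecidablePred (· ∈ T)] (hTS : T ⊆ S) (u x : (i : ι) → α i) :
    resampleMean μ S f (T.piecewise u x) = resampleMean μ S f x := by
  simp only [resampleMean, Set.piecewise_piecewise_of_subset_right hTS]

variable [∀ i, IsProbabilityMeasure (μ i)]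

lemma measurable_resampleMean (S : Set ι) [DecidablePred (· ∈ S)] (hf : Measurable f) :
    Measurable (resampleMean μ S f) :=
  (hf.comp (by fun_prop : Measurable fun p : ((i : ι) → α i) × ((i : ι) → α i) =>
    S.piecewise p.2 p.1)).stronglyMeasurable.integral_prod_right'.measurable

lemma measurePreserving_piecewise (S : Set ι) [DecidablePred (· ∈ S)] :
    MeasurePreserving (fun p : ((i : ι) → α i) × ((i : ι) → α i) => S.piecewise p.1 p.2)
      ((Measure.pi μ).prod (Measure.pi μ)) (Measure.pi μ) := by
  refine ⟨by fun_prop, (Measure.pi_eq fun t ht => ?_).symm⟩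
  have hpre : (fun p : ((i : ι) → α i) × ((i : ι) → α i) => S.piecewise p.1 p.2) ⁻¹'
      Set.univ.pi t = Set.univ.pi (S.piecewise t fun _ => Set.univ) ×ˢ
        Set.univ.pi (S.piecewise (fun _ => Set.univ) t) := by
    ext p
    simp only [Set.mem_preimage, Set.mem_prod, Set.mem_univ_pi, ← forall_and]
    refine forall_congr' fun i => ?_
    by_cases hi : i ∈ S <;> simp [hi]
  rw [Measure.map_apply (by fun_prop) (.univ_pi ht), hpre, Measure.prod_prod,
    Measure.pi_pi, Measure.pi_pi, ← prod_mul_distrib]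
  refine prod_congr rfl fun i _ => ?_
  by_cases hi : i ∈ S <;> simp [hi]

lemma integral_resampleMean (S : Set ι) [DecidablePred (· ∈ S)]
    (hf : Integrable f (Measure.pi μ)) :
    ∫ x, resampleMean μ S f x ∂Measure.pi μ = ∫ x, f x ∂Measure.pi μ := by
  have hmp := (measurePreserving_piecewise μ S).comp (Measure.measurePreserving_swap
    (μ := Measure.pi μ) (ν := Measure.pi μ))
  simp only [resampleMean]
  rw [integral_integral (f := fun x u => f (S.piecewise u x))
    (hmp.integrable_comp_of_integrable hf)]
  exact hmp.integral_comp_of_aestronglyMeasurable hf.aestronglyMeasurable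

lemma resampleMean_of_eq_empty {S : Set ι} [DecidablePred (· ∈ S)] (hS : S = ∅) :
    resampleMean μ S f = f := by
  ext x
  have hx : ∀ u, S.piecewise u x = x := fun u =>
    funext fun i => Set.piecewise_eq_of_notMem _ _ _ (by simp [hS])
  simp [resampleMean, hx]

lemma resampleMean_mem_unitInterval (S : Set ι) [DecidablePred (· ∈ S)] (hf : Measurable f)
    (hf01 : ∀ x, f x ∈ unitInterval) (x : (i : ι) → α i) :
    resampleMean μ S f x ∈ unitInterval :=
  integral_mem_unitInterval (by fun_prop) fun _ => hf01 _

lemma resampleMean_resampleMean {S T : Set ι} [DecidablePred (· ∈ S)] [DecidablePred (· ∈ T)]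
    (hST : S ⊆ T) (hf : Measurable f) (hf01 : ∀ x, f x ∈ unitInterval) :
    resampleMean μ T (resampleMean μ S f) = resampleMean μ T f := by
  ext x
  simp only [resampleMean, Set.piecewise_piecewise_of_subset hST]
  exact integral_resampleMean μ S (f := fun y => f (T.piecewise y x))
    (integrable_of_mem_unitInterval (by fun_prop) fun _ => hf01 _)

lemma resampleMean_pow_le (S : Set ι) [DecidablePred (· ∈ S)] (hf : Measurable f)
    (hf01 : ∀ x, f x ∈ unitInterval) (n : ℕ) (x : (i : ι) → α i) :
    resampleMean μ S f x ^ n ≤ resampleMean μ S (fun y => f y ^ n) x :=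
  pow_integral_le_integral_pow (by fun_prop) (fun _ => hf01 _) n

/-- The `T`-invariant weight `h` factors out of the `T`-average, and Jensen applies to the
inner average. -/
lemma integral_resampleMean_pow_mul_le {S T : Set ι} [DecidablePred (· ∈ S)]
    [DecidablePred (· ∈ T)] (hST : S ⊆ T) (hf : Measurable f) (hf01 : ∀ x, f x ∈ unitInterval)
    {h : ((i : ι) → α i) → ℝ} (hh : Measurable h) (hh01 : ∀ x, h x ∈ unitInterval)
    (hT : ∀ u x, h (T.piecewise u x) = h x) (n : ℕ) :
    ∫ x, resampleMean μ T f x ^ n * h x ∂Measure.pi μ ≤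
      ∫ x, resampleMean μ S f x ^ n * h x ∂Measure.pi μ := by
  set g := resampleMean μ S f
  have hg := measurable_resampleMean μ S hf
  have hg01 := resampleMean_mem_unitInterval μ S hf hf01
  have hgn01 : ∀ x, g x ^ n ∈ unitInterval :=
    fun x => pow_mem (S := unitInterval.submonoid) (hg01 x) n
  calc ∫ x, resampleMean μ T f x ^ n * h x ∂Measure.pi μ
      ≤ ∫ x, resampleMean μ T (fun y => g y ^ n) x * h x ∂Measure.pi μ := by
        refine integral_mono (integrable_of_mem_unitInterval ?_ fun x => ?_)
          (integrable_of_mem_unitInterval ?_ fun x => ?_) fun x => ?_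
        · exact ((measurable_resampleMean μ T hf).pow_const n).mul hh
        · exact unitInterval.mul_mem (pow_mem (S := unitInterval.submonoid)
            (resampleMean_mem_unitInterval μ T hf hf01 x) n) (hh01 x)
        · exact (measurable_resampleMean μ T (hg.pow_const n)).mul hh
        · exact unitInterval.mul_mem
            (resampleMean_mem_unitInterval μ T (hg.pow_const n) hgn01 x) (hh01 x)
        · rw [← resampleMean_resampleMean μ hST hf hf01]
          exact mul_le_mul_of_nonneg_right (resampleMean_pow_le μ T hg hg01 n x) (hh01 x).1
    _ = ∫ x, g x ^ n * h x ∂Measure.pi μ := by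
        simp only [← resampleMean_mul_of_forall_piecewise_eq μ T hT]
        exact integral_resampleMean μ T (integrable_of_mem_unitInterval ((hg.pow_const n).mul hh)
          fun x => unitInterval.mul_mem (hgn01 x) (hh01 x))

theorem pow_integral_le_integral_prod_resampleMean {k : ℕ} {S : ℕ → Set ι}
    [∀ n, DecidablePred (· ∈ S n)] (hS : MonotoneOn S (Set.Iic k)) (hf : Measurable f)
    (hf01 : ∀ x, f x ∈ unitInterval) :
    (∫ x, f x ∂Measure.pi μ) ^ (k + 1) ≤
      ∫ x, ∏ ℓ ∈ range (k + 1), resampleMean μ (S ℓ) f x ∂Measure.pi μ := by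
  set g := fun ℓ => resampleMean μ (S ℓ) f
  have hg : ∀ ℓ, Measurable (g ℓ) := fun ℓ => measurable_resampleMean μ (S ℓ) hf
  have hg01 : ∀ ℓ x, g ℓ x ∈ unitInterval :=
    fun ℓ => resampleMean_mem_unitInterval μ (S ℓ) hf hf01
  set A := fun t => ∫ x, g t x ^ (t + 1) * ∏ ℓ ∈ Ioc t k, g ℓ x ∂Measure.pi μ
  have hfirst : (∫ x, f x ∂Measure.pi μ) ^ (k + 1) ≤ A k := by
    simpa [A, ← integral_resampleMean μ (S k) (integrable_of_mem_unitInterval hf hf01)]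
      using pow_integral_le_integral_pow (hg k) (hg01 k) (k + 1)
  have hstep : AntitoneOn A (Set.Iic k) := by
    refine antitoneOn_of_succ_le Set.ordConnected_Iic fun t _ _ ht => ?_
    simp only [Order.succ_eq_add_one, Set.mem_Iic] at ht ⊢
    have hsplit : ∀ x, g (t + 1) x ^ (t + 1 + 1) * ∏ ℓ ∈ Ioc (t + 1) k, g ℓ x =
        g (t + 1) x ^ (t + 1) * ∏ ℓ ∈ Ioc t k, g ℓ x := fun x => by
      rw [← insert_Ioc_succ_left_eq_Ioc (by omega : t < k), Order.succ_eq_add_one,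
        prod_insert (by simp), pow_succ, mul_assoc]
    simp only [A, hsplit]
    refine integral_resampleMean_pow_mul_le μ (hS (by simp; omega) (by simp; omega) t.le_succ)
      hf hf01 (measurable_prod _ fun ℓ _ => hg ℓ)
      (fun x => unitInterval.prod_mem fun ℓ _ => hg01 ℓ x) (fun u x => ?_) (t + 1)
    refine prod_congr rfl fun ℓ hℓ => resampleMean_piecewise_of_subset μ ?_ u x
    simp only [mem_Ioc] at hℓ
    exact hS (by simp; omega) (by simp; omega) hℓ.1
  have hlast : A 0 = ∫ x, ∏ ℓ ∈ range (k + 1), g ℓ x ∂Measure.pi μ := by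
    have hrange : range (k + 1) = insert 0 (Ioc 0 k) := by ext; simp
    simp only [A, hrange, prod_insert left_notMem_Ioc, zero_add, pow_one]
  exact hfirst.trans ((hstep (by simp) (by simp) (Nat.zero_le k)).trans hlast.le)

theorem integral_prod_piecewise_eq_integral_prod_resampleMean {k : ℕ} {S : ℕ → Set ι}
    [∀ n, DecidablePred (· ∈ S n)] (hS0 : S 0 = ∅) (hf : Measurable f)
    (hf01 : ∀ x, f x ∈ unitInterval) :
    ∫ y, ∏ ℓ : Fin (k + 1), f ((S ℓ).piecewise (y ℓ) (y 0)) ∂(Measure.pi fun _ => Measure.pi μ) =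
      ∫ x, ∏ ℓ ∈ range (k + 1), resampleMean μ (S ℓ) f x ∂Measure.pi μ := by
  rw [← ((measurePreserving_piFinSuccAbove (fun _ => Measure.pi μ) 0).symm _).integral_comp']
  simp only [MeasurableEquiv.piFinSuccAbove_symm_apply, Fin.insertNthEquiv, Equiv.coe_fn_mk,
    Fin.insertNth_zero', Fin.prod_univ_succ, Fin.cons_zero, Fin.cons_succ, Set.piecewise_same]
  have hmeas : Measurable fun z : ((i : ι) → α i) × (Fin k → (i : ι) → α i) =>
      f z.1 * ∏ j : Fin k, f ((S j.succ).piecewise (z.2 j) z.1) := by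
    fun_prop
  rw [integral_prod _ (integrable_of_mem_unitInterval hmeas fun z =>
    unitInterval.mul_mem (hf01 _) (unitInterval.prod_mem fun j _ => hf01 _))]
  refine integral_congr_ae (ae_of_all _ fun x => ?_)
  dsimp only
  rw [integral_const_mul,
    integral_fintype_prod_eq_prod (fun (j : Fin k) u => f ((S j.succ).piecewise u x)),
    prod_range_succ', mul_comm, resampleMean_of_eq_empty μ hS0, ← Fin.prod_univ_eq_prod_range]
  rfl

end Resampling

section Reading

open Function

variable {β : Type*} [MeasurableSpace β] (ν : Measure β) [IsProbabilityMeasure ν]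

lemma measurePreserving_comp_of_injective {A B : Type*} [Fintype A] [Fintype B] {E : B → A}
    (hE : Injective E) :
    MeasurePreserving (fun ω : A → β => ω ∘ E) (Measure.pi fun _ => ν)
      (Measure.pi fun _ => ν) := by
  refine ⟨by fun_prop, ?_⟩
  have hcomp : (fun ω : A → β => ω ∘ E) = MeasurableEquiv.piCongrLeft (fun _ => β)
      (Equiv.ofInjective E hE).symm ∘ (Set.range E).domRestrict := by
    ext ω b
    simp [MeasurableEquiv.coe_piCongrLeft, Equiv.piCongrLeft_apply]
  rw [← Measure.infinitePi_eq_pi, ← Measure.infinitePi_eq_pi, hcomp,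
    ← Measure.map_map (by fun_prop) (by fun_prop), Measure.infinitePi_map_restrict']
  exact Measure.infinitePi_map_piCongrLeft (fun _ : B => ν) (Equiv.ofInjective E hE).symm

lemma measurePreserving_uncurry {A B : Type*} [Fintype A] [Fintype B] :
    MeasurePreserving (uncurry : (A → B → β) → (A × B → β))
      (Measure.pi fun _ => Measure.pi fun _ => ν) (Measure.pi fun _ => ν) := by
  refine ⟨by fun_prop, ?_⟩
  simpa only [Measure.infinitePi_eq_pi, MeasurableEquiv.coe_curry_symm]
    using Measure.infinitePi_map_curry_symm (fun (_ : A) (_ : B) => ν)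

lemma measurePreserving_curry {A B : Type*} [Fintype A] [Fintype B] :
    MeasurePreserving (curry : (A × B → β) → (A → B → β))
      (Measure.pi fun _ => ν) (Measure.pi fun _ => Measure.pi fun _ => ν) := by
  refine ⟨by fun_prop, ?_⟩
  simpa only [Measure.infinitePi_eq_pi, MeasurableEquiv.coe_curry]
    using Measure.infinitePi_map_curry (fun (_ : A) (_ : B) => ν)

theorem measurePreserving_read {A B κ : Type*} [Fintype A] [Fintype B] [Fintype κ]
    (e : B → κ → A) (he : ∀ r, Injective (e · r)) :
    MeasurePreserving (fun (ω : A → κ → β) ℓ r => ω (e ℓ r) r)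
      (Measure.pi fun _ => Measure.pi fun _ => ν) (Measure.pi fun _ => Measure.pi fun _ => ν) := by
  have hE : Injective fun p : B × κ => (e p.1 p.2, p.2) := by
    rintro ⟨ℓ, r⟩ ⟨ℓ', r'⟩ h
    obtain ⟨h, rfl : r = r'⟩ := Prod.mk.inj h
    exact Prod.ext (he r h) rfl
  exact (measurePreserving_curry ν).comp
    ((measurePreserving_comp_of_injective ν hE).comp (measurePreserving_uncurry ν))

end Reading

section Blocks

open Function

lemma psiIdx_le (s : ℕ → ℕ) (k r : ℕ) : psiIdx s k r ≤ k := Nat.findGreatest_le k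

variable {s : ℕ → ℕ} {k : ℕ}

lemma psiIdx_lt_iff (hs0 : s 0 = 0) (hs : MonotoneOn s (Set.Iic k)) {ℓ r : ℕ} (hℓ : ℓ ≤ k) :
    psiIdx s k r < ℓ ↔ r < s ℓ := by
  refine ⟨fun h => ?_, fun h => ?_⟩
  · by_contra! h'
    exact (Nat.le_findGreatest hℓ h').not_gt h
  · by_contra! h'
    have hspec : s (psiIdx s k r) ≤ r :=
      Nat.findGreatest_spec (P := fun i => s i ≤ r) (Nat.zero_le k) (by simp [hs0])
    have := hs (Set.mem_Iic.2 hℓ) (Set.mem_Iic.2 (psiIdx_le s k r)) h'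
    omega

/-- Column of the block read by `Ψ^ℓ` in row `i`. For `0 < ℓ ≤ i`, `Ψ^ℓ` reads the same block as
`Ψ^0` in row `i`; such `ℓ` are sent to the columns `k - i + ℓ`, which no `Ψ^ℓ` reads, so that
distinct `ℓ` get distinct columns. -/
def blockCol (k i ℓ : ℕ) : ℕ := if i < ℓ then ℓ - i else if ℓ = 0 then 0 else k - i + ℓ

lemma blockCol_lt {i ℓ : ℕ} (hℓ : ℓ ≤ k) : blockCol k i ℓ < k + 1 := by
  unfold blockCol
  split_ifs <;> omega

lemma blockCol_inj {i ℓ ℓ' : ℕ} (hℓ : ℓ ≤ k) (hℓ' : ℓ' ≤ k)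
    (h : blockCol k i ℓ = blockCol k i ℓ') : ℓ = ℓ' := by
  unfold blockCol at h
  split_ifs at h <;> omega

def blockIndex (s : ℕ → ℕ) (k M : ℕ) (ℓ : Fin (k + 1)) (r : Fin M) :
    Fin (k + 1) × Fin (k + 1) :=
  (⟨psiIdx s k r, Nat.lt_succ_of_le (psiIdx_le s k r)⟩,
    ⟨blockCol k (psiIdx s k r) ℓ, blockCol_lt ℓ.is_le⟩)

lemma blockIndex_injective (s : ℕ → ℕ) (k M : ℕ) (r : Fin M) :
    Injective (blockIndex s k M · r) := fun ℓ ℓ' h =>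
  Fin.ext <| blockCol_inj ℓ.is_le ℓ'.is_le (congrArg (fun p => (p.2 : ℕ)) h)

lemma Psi_eq_piecewise {Υ : Type*} {M : ℕ} (hs0 : s 0 = 0) (hs : MonotoneOn s (Set.Iic k))
    (ω : Fin (k + 1) × Fin (k + 1) → Fin M → Υ) (ℓ : Fin (k + 1)) :
    Psi s k M ω ℓ = {r : Fin M | (r : ℕ) < s ℓ}.piecewise (fun r => ω (blockIndex s k M ℓ r) r)
      (fun r => ω (blockIndex s k M 0 r) r) := by
  funext r
  have hi := psiIdx_le s k r
  by_cases hr : (r : ℕ) < s ℓ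
  · have hlt := (psiIdx_lt_iff hs0 hs ℓ.is_le).2 hr
    simp only [Psi, Set.piecewise, Set.mem_ofPred_eq, hr, if_true]
    congr 2 <;> ext <;> simp [blockCol, hlt] <;> omega
  · have hge := not_lt.1 (mt (psiIdx_lt_iff hs0 hs ℓ.is_le).1 hr)
    simp only [Psi, Set.piecewise, Set.mem_ofPred_eq, hr, if_false]
    congr 2 <;> ext <;> simp [blockCol] <;> omega

theorem integral_prod_Psi_eq_integral_prod_resampleMean {Υ : Type*} [MeasurableSpace Υ]
    (μ : Measure Υ) [IsProbabilityMeasure μ] {M : ℕ} (hs0 : s 0 = 0)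
    (hs : MonotoneOn s (Set.Iic k)) {f : (Fin M → Υ) → ℝ} (hf : Measurable f)
    (hf01 : ∀ x, f x ∈ unitInterval) :
    ∫ ω, ∏ ℓ ∈ range (k + 1), f (Psi s k M ω ℓ)
        ∂(Measure.pi fun _ : Fin (k + 1) × Fin (k + 1) => Measure.pi fun _ : Fin M => μ) =
      ∫ x, ∏ ℓ ∈ range (k + 1), resampleMean (fun _ => μ) {r : Fin M | (r : ℕ) < s ℓ} f x
        ∂(Measure.pi fun _ => μ) := by
  have hread := measurePreserving_read μ (blockIndex s k M) (blockIndex_injective s k M)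
  calc _ = ∫ ω, ∏ ℓ : Fin (k + 1), f ({r : Fin M | (r : ℕ) < s ℓ}.piecewise
          (fun r => ω (blockIndex s k M ℓ r) r) (fun r => ω (blockIndex s k M 0 r) r))
        ∂(Measure.pi fun _ : Fin (k + 1) × Fin (k + 1) => Measure.pi fun _ : Fin M => μ) := by
        simp only [← Fin.prod_univ_eq_prod_range, Psi_eq_piecewise hs0 hs]
    _ = ∫ y, ∏ ℓ : Fin (k + 1), f ({r : Fin M | (r : ℕ) < s ℓ}.piecewise (y ℓ) (y 0))
        ∂(Measure.pi fun _ : Fin (k + 1) => Measure.pi fun _ : Fin M => μ) :=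
      hread.integral_comp_of_aestronglyMeasurable (g := fun y => ∏ ℓ : Fin (k + 1),
        f ({r : Fin M | (r : ℕ) < s ℓ}.piecewise (y ℓ) (y 0)))
        (Measurable.aestronglyMeasurable (by fun_prop))
    _ = _ := integral_prod_piecewise_eq_integral_prod_resampleMean (fun _ => μ)
      (S := fun ℓ => {r : Fin M | (r : ℕ) < s ℓ}) (by simp [hs0]) hf hf01

end Blocks

theorem statement19_general {Υ : Type u} [MeasurableSpace Υ] (μ : Measure Υ) [IsProbabilityMeasure μ]
    (k M : ℕ) (s : ℕ → ℕ)
    (hs0 : s 0 = 0) (hmono : ∀ i, i ≤ k → s i ≤ s (i + 1))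
    (f : (Fin M → Υ) → ℝ) (hf : Measurable f) (hf01 : ∀ x, f x ∈ Set.Icc (0:ℝ) 1) :
    (∫ x, f x ∂(Measure.pi fun _ : Fin M => μ)) ^ (k + 1) ≤
      ∫ ω, ∏ ℓ ∈ Finset.range (k + 1), f (Psi s k M ω ℓ)
        ∂(Measure.pi fun _ : Fin (k + 1) × Fin (k + 1) =>
            (Measure.pi fun _ : Fin M => μ)) := by
  have hs : MonotoneOn s (Set.Iic k) :=
    monotoneOn_of_le_succ Set.ordConnected_Iic fun i _ hi _ => hmono i hi
  rw [integral_prod_Psi_eq_integral_prod_resampleMean μ hs0 hs hf hf01]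
  exact pow_integral_le_integral_prod_resampleMean (fun _ => μ)
    (fun a ha b hb hab r (hr : (r : ℕ) < s a) => hr.trans_le (hs ha hb hab)) hf hf01

theorem statement19 {Υ : Type u} [MeasurableSpace Υ] (μ : Measure Υ) [IsProbabilityMeasure μ]
    (k M : ℕ) (hk : 0 < k) (hM : 0 < M) (s : ℕ → ℕ)
    (hs0 : s 0 = 0) (hmono : ∀ i, i ≤ k → s i ≤ s (i + 1)) (hsk : s (k + 1) = M)
    (f : (Fin M → Υ) → ℝ) (hf : Measurable f) (hf01 : ∀ x, f x ∈ Set.Icc (0:ℝ) 1) :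
    (∫ x, f x ∂(Measure.pi fun _ : Fin M => μ)) ^ (k + 1) ≤
      ∫ ω, ∏ ℓ ∈ Finset.range (k + 1), f (Psi s k M ω ℓ)
        ∂(Measure.pi fun _ : Fin (k + 1) × Fin (k + 1) =>
            (Measure.pi fun _ : Fin M => μ)) :=
  statement19_general μ k M s hs0 hmono f hf hf01
end
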